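/- Let S ∈ B(ℓ²(ℕ)) be the weighted shift with Se_n = α_n e_{n+1} where α ∈ ℓ^∞(ℕ) takes values in {0,1} and contains blocks of consecutive 1s of unboundedly increasing length (i.e., for each j there are indices l_j with α_{l_j+1} = ... = α_{l_j+j} = 1). Then the spectrum of S is the closed unit disc B₁(0). Moreover, for any k, the truncation P_k S (with P_k the projection onto the first k basis vectors) satisfies sp(P_k S) = {0}. -/

import Mathlib

/-!
Since `‖S‖ ≤ 1`, the spectrum lies in the closed unit disc. Conversely, let `|μ| < 1` and let
`α_a = ⋯ = α_{a+J-1} = 1` be a run of ones that starts at `a = 0` or right after a zero weight.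
Then `S*` kills `e_a` and maps `e_{a+i+1}` to `e_{a+i}`, so `u = ∑_{i ≤ J} μ̄ⁱ e_{a+i}` satisfies
`(μ̄ - S*) u = μ̄^{J+1} e_{a+J}` while `‖u‖ ≥ 1`. Letting `J → ∞` makes `μ̄` an approximate
eigenvalue of `S*`, hence `μ ∈ sp(S)`; the spectrum is closed, so it is the whole closed disc.
The truncation `P_k S` pushes every coordinate one step forward and kills those beyond `k`,
so `(P_k S)^{k+1} = 0`, and the spectrum of a nilpotent element is `{0}`.
-/

open Filter Topology

noncomputable section

/-- `ℓ²(ℕ)` over `ℂ`. -/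
abbrev L2 : Type := lp (fun _ : ℕ => ℂ) 2

/-- The canonical orthonormal basis vectors of `ℓ²(ℕ)`. -/
def eVec (i : ℕ) : L2 := lp.single 2 i 1

/-- `Ran P_k`: the span of the first `k` canonical basis vectors. -/
def spanE (k : ℕ) : Submodule ℂ L2 := Submodule.span ℂ (eVec '' Set.Iio k)

/-- The orthogonal projection `P_k` onto the span of the first `k` basis vectors. -/
def Pproj (k : ℕ) : L2 →L[ℂ] L2 :=
  haveI : FiniteDimensional ℂ (spanE k) :=
    FiniteDimensional.span_of_finite ℂ ((Set.finite_Iio k).image eVec)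
  (spanE k).subtypeL.comp (spanE k).orthogonalProjectionOnto

open ContinuousLinearMap

theorem exists_run_start_le {p : ℕ → Prop} {l j : ℕ} (h : ∀ i, l ≤ i → i < l + j → p i) :
    ∃ a ≤ l, (a = 0 ∨ ¬ p (a - 1)) ∧ ∀ i, a ≤ i → i < l + j → p i := by
  induction l generalizing j with
  | zero => exact ⟨0, le_rfl, Or.inl rfl, h⟩
  | succ l ih =>
    by_cases hl : p l
    · obtain ⟨a, hal, ha0, ha⟩ := ih (j := j + 1) fun i hli hij => by
        rcases hli.eq_or_lt with rfl | hli
        exacts [hl, h i hli (by omega)]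
      exact ⟨a, by omega, ha0, fun i hai hij => ha i hai (by omega)⟩
    · exact ⟨l + 1, le_rfl, Or.inr hl, h⟩

theorem smul_sub_map_sum_pow_smul {R M F : Type*} [CommRing R] [AddCommGroup M] [Module R M]
    [FunLike F M M] [LinearMapClass F R M M] (T : F) (v : ℕ → M) (c : R) {J : ℕ}
    (h0 : T (v 0) = 0) (hsucc : ∀ i < J, T (v (i + 1)) = v i) :
    c • (∑ i ∈ Finset.range (J + 1), c ^ i • v i) - T (∑ i ∈ Finset.range (J + 1), c ^ i • v i) =
      c ^ (J + 1) • v J := by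
  induction J with
  | zero => simp [h0]
  | succ J ih =>
    rw [Finset.sum_range_succ _ (J + 1), smul_add, map_add, add_sub_add_comm,
      ih fun i hi => hsucc i (by omega), map_smul, hsucc J J.lt_succ_self, smul_smul, ← pow_succ']
    abel

theorem ContinuousLinearMap.not_isUnit_of_forall_exists_norm_apply_lt {𝕜 E : Type*}
    [NontriviallyNormedField 𝕜] [NormedAddCommGroup E] [NormedSpace 𝕜 E] (T : E →L[𝕜] E)
    (h : ∀ ε > 0, ∃ x, ‖T x‖ < ε * ‖x‖) : ¬ IsUnit T := by
  rintro ⟨U, rfl⟩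
  set C := ‖(↑U⁻¹ : E →L[𝕜] E)‖
  have hC : 0 < C + 1 := by positivity
  obtain ⟨x, hx⟩ := h (C + 1)⁻¹ (inv_pos.mpr hC)
  have hx0 : 0 < ‖x‖ :=
    pos_of_mul_pos_right ((norm_nonneg _).trans_lt hx) (inv_pos.mpr hC).le
  have : ‖x‖ < ‖x‖ :=
    calc ‖x‖ = ‖(↑U⁻¹ : E →L[𝕜] E) ((U : E →L[𝕜] E) x)‖ := by
          rw [← mul_apply_eq_comp, Units.inv_mul, one_apply_eq_self]
      _ ≤ C * ‖(U : E →L[𝕜] E) x‖ := le_opNorm _ _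
      _ ≤ C * ((C + 1)⁻¹ * ‖x‖) := by gcongr
      _ = C / (C + 1) * ‖x‖ := by ring
      _ < 1 * ‖x‖ := by gcongr; rw [div_lt_one hC]; linarith
      _ = ‖x‖ := one_mul _
  exact this.false

theorem ContinuousLinearMap.mem_spectrum_of_forall_exists_norm_lt {𝕜 E : Type*}
    [NontriviallyNormedField 𝕜] [NormedAddCommGroup E] [NormedSpace 𝕜 E] (T : E →L[𝕜] E)
    (μ : 𝕜) (h : ∀ ε > 0, ∃ x, ‖μ • x - T x‖ < ε * ‖x‖) : μ ∈ spectrum 𝕜 T :=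
  spectrum.mem_iff.mpr <| not_isUnit_of_forall_exists_norm_apply_lt _ fun ε hε => by
    simpa [Algebra.algebraMap_eq_smul_one] using h ε hε

theorem lp.norm_le_of_norm_succ_le {E : Type*} [NormedAddCommGroup E] {p : ENNReal}
    (hp : 0 < p.toReal) {f g : lp (fun _ : ℕ => E) p} (h0 : f 0 = 0)
    (h : ∀ n, ‖f (n + 1)‖ ≤ ‖g n‖) : ‖f‖ ≤ ‖g‖ := by
  refine lp.norm_le_of_tsum_le hp (lp.norm_nonneg' g) ?_
  have hf := (lp.memℓp f).summable hp
  have hf0 : ‖f 0‖ ^ p.toReal = 0 := by simp [h0, Real.zero_rpow hp.ne']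
  rw [lp.norm_rpow_eq_tsum hp g, hf.tsum_eq_zero_add, hf0, zero_add]
  exact Summable.tsum_le_tsum (fun n : ℕ => Real.rpow_le_rpow (norm_nonneg _) (h n) hp.le)
    (hf.comp_injective Nat.succ_injective) ((lp.memℓp g).summable hp)

theorem spectrum_eq_singleton_zero_of_pow_eq_zero {𝕜 A : Type*} [Field 𝕜] [IsAlgClosed 𝕜]
    [Ring A] [Algebra 𝕜 A] [Nontrivial A] {a : A} {n : ℕ} (hn : 0 < n) (ha : a ^ n = 0) :
    spectrum 𝕜 a = {0} := by
  have h := spectrum.map_pow_of_pos (𝕜 := 𝕜) a hn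
  rw [ha, spectrum.zero_eq] at h
  ext μ
  constructor
  · intro hμ
    have : μ ^ n ∈ ({0} : Set 𝕜) := h ▸ Set.mem_image_of_mem _ hμ
    exact pow_eq_zero_iff hn.ne' |>.mp this
  · rintro rfl
    obtain ⟨ν, hν, hν0⟩ : (0 : 𝕜) ∈ (· ^ n) '' spectrum 𝕜 a := h ▸ Set.mem_singleton 0
    rwa [← pow_eq_zero_iff hn.ne' |>.mp hν0]

theorem eVec_apply (i j : ℕ) : eVec i j = if j = i then 1 else 0 := by
  simp [eVec, Pi.single_apply]

theorem inner_eVec_left (i : ℕ) (f : L2) : inner ℂ (eVec i) f = f i := by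
  simp [eVec, lp.inner_single_left]

theorem norm_eVec (i : ℕ) : ‖eVec i‖ = 1 := by
  simp [eVec, lp.norm_single]

instance : Nontrivial L2 := ⟨eVec 0, 0, norm_ne_zero_iff.mp (by simp [norm_eVec])⟩

theorem L2.ext_inner_eVec {f g : L2} (h : ∀ n, inner ℂ (eVec n) f = inner ℂ (eVec n) g) :
    f = g :=
  lp.ext <| funext fun n => by simpa only [inner_eVec_left] using h n

theorem one_le_norm_sum_pow_smul_eVec (c : ℂ) (a J : ℕ) :
    1 ≤ ‖∑ i ∈ Finset.range (J + 1), c ^ i • eVec (a + i)‖ :=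
  calc 1 = ‖inner ℂ (eVec a) (∑ i ∈ Finset.range (J + 1), c ^ i • eVec (a + i))‖ := by
        simp [inner_eVec_left, eVec_apply]
    _ ≤ ‖eVec a‖ * ‖∑ i ∈ Finset.range (J + 1), c ^ i • eVec (a + i)‖ := norm_inner_le_norm _ _
    _ = _ := by rw [norm_eVec, one_mul]

instance (k : ℕ) : FiniteDimensional ℂ (spanE k) :=
  FiniteDimensional.span_of_finite ℂ ((Set.finite_Iio k).image eVec)

theorem Pproj_eq_starProjection (k : ℕ) : Pproj k = (spanE k).starProjection := rfl

theorem Pproj_apply (k : ℕ) (y : L2) (n : ℕ) : Pproj k y n = if n < k then y n else 0 := by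
  rw [← inner_eVec_left, Pproj_eq_starProjection,
    ← Submodule.inner_starProjection_left_eq_right]
  split_ifs with hn
  · have hmem : eVec n ∈ spanE k := Submodule.subset_span (Set.mem_image_of_mem eVec hn)
    rw [Submodule.starProjection_eq_self_iff.mpr hmem, inner_eVec_left]
  · have hperp : spanE k ≤ LinearMap.ker (innerₛₗ ℂ (eVec n)) :=
      Submodule.span_le.mpr <| by
        rintro _ ⟨i, hi, rfl⟩
        simp only [SetLike.mem_coe, LinearMap.mem_ker, innerₛₗ_apply_apply, inner_eVec_left,
          eVec_apply]
        exact if_neg (by simp at hi; omega)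
    rw [(Submodule.starProjection_apply_eq_zero_iff _).mpr
      ((Submodule.mem_orthogonal' _ _).mpr fun u hu => hperp hu), inner_zero_left]

def IsWeightedShift (α : ℕ → ℂ) (S : L2 →L[ℂ] L2) : Prop :=
  ∀ n, S (eVec n) = α n • eVec (n + 1)

def HasLongRuns (α : ℕ → ℂ) : Prop :=
  ∀ J, ∃ a, (a = 0 ∨ α (a - 1) = 0) ∧ ∀ i < J, α (a + i) = 1

theorem hasLongRuns_of_blocks {α : ℕ → ℂ} (hα : ∀ n, α n = 0 ∨ α n = 1)
    (hblocks : ∀ j : ℕ, ∃ l : ℕ, ∀ i : ℕ, l + 1 ≤ i → i ≤ l + j → α i = 1) :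
    HasLongRuns α := by
  intro J
  obtain ⟨l, hl⟩ := hblocks J
  obtain ⟨a, hal, ha0, ha⟩ := exists_run_start_le (p := fun i => α i = 1) (l := l + 1) (j := J)
    fun i h1 h2 => hl i h1 (by omega)
  exact ⟨a, ha0.imp_right (hα _).resolve_right, fun i hi => ha _ (by omega) (by omega)⟩

namespace IsWeightedShift

variable {α : ℕ → ℂ} {S : L2 →L[ℂ] L2}

theorem adjoint_eVec_zero (hS : IsWeightedShift α S) : adjoint S (eVec 0) = 0 :=
  L2.ext_inner_eVec fun n => by
    simp [adjoint_inner_right, hS n, inner_smul_left, inner_eVec_left, eVec_apply]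

theorem adjoint_eVec_succ (hS : IsWeightedShift α S) (n : ℕ) :
    adjoint S (eVec (n + 1)) = starRingEnd ℂ (α n) • eVec n :=
  L2.ext_inner_eVec fun m => by
    rcases eq_or_ne m n with rfl | hmn
    · simp [adjoint_inner_right, hS m, inner_smul_left, norm_eVec]
    · simp [adjoint_inner_right, hS m, inner_smul_left, inner_eVec_left, eVec_apply, hmn]

theorem apply_zero (hS : IsWeightedShift α S) (x : L2) : S x 0 = 0 := by
  rw [← inner_eVec_left, ← adjoint_inner_left, hS.adjoint_eVec_zero, inner_zero_left]

theorem apply_succ (hS : IsWeightedShift α S) (x : L2) (n : ℕ) : S x (n + 1) = α n * x n := by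
  rw [← inner_eVec_left, ← adjoint_inner_left, hS.adjoint_eVec_succ, inner_smul_left,
    inner_eVec_left, Complex.conj_conj]

theorem opNorm_le_one (hS : IsWeightedShift α S) (hα : ∀ n, ‖α n‖ ≤ 1) : ‖S‖ ≤ 1 :=
  S.opNorm_le_bound zero_le_one fun x => by
    rw [one_mul]
    refine lp.norm_le_of_norm_succ_le (by norm_num) (hS.apply_zero x) fun n => ?_
    rw [hS.apply_succ, norm_mul]
    exact mul_le_of_le_one_left (norm_nonneg _) (hα n)

theorem adjoint_eVec_eq_zero (hS : IsWeightedShift α S) {a : ℕ} (ha : a = 0 ∨ α (a - 1) = 0) :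
    adjoint S (eVec a) = 0 := by
  rcases a with _ | a
  · exact hS.adjoint_eVec_zero
  · have : α a = 0 := ha.resolve_left a.succ_ne_zero
    rw [hS.adjoint_eVec_succ, this, map_zero, zero_smul]

theorem mem_spectrum_of_runs (hS : IsWeightedShift α S) (hruns : HasLongRuns α) {μ : ℂ}
    (hμ : ‖μ‖ < 1) : μ ∈ spectrum ℂ S := by
  have hstar : star μ ∈ spectrum ℂ (adjoint S) := by
    refine (adjoint S).mem_spectrum_of_forall_exists_norm_lt _ fun ε hε => ?_
    obtain ⟨J, hJ⟩ := exists_pow_lt_of_lt_one hε hμ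
    obtain ⟨a, ha0, ha⟩ := hruns J
    refine ⟨∑ i ∈ Finset.range (J + 1), star μ ^ i • eVec (a + i), ?_⟩
    rw [smul_sub_map_sum_pow_smul (adjoint S) (fun i => eVec (a + i)) _
      (hS.adjoint_eVec_eq_zero ha0) fun i hi => by
        rw [← add_assoc, hS.adjoint_eVec_succ, ha i hi, map_one, one_smul]]
    calc ‖star μ ^ (J + 1) • eVec (a + J)‖ = ‖μ‖ ^ (J + 1) := by simp [norm_smul, norm_eVec]
      _ ≤ ‖μ‖ ^ J := pow_le_pow_of_le_one (norm_nonneg _) hμ.le J.le_succ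
      _ < ε := hJ
      _ ≤ ε * ‖∑ i ∈ Finset.range (J + 1), star μ ^ i • eVec (a + i)‖ :=
        le_mul_of_one_le_right hε.le (one_le_norm_sum_pow_smul_eVec _ _ _)
  rwa [← star_eq_adjoint, spectrum.map_star, Set.mem_star, star_star] at hstar

theorem spectrum_eq_closedBall (hS : IsWeightedShift α S) (hα : ∀ n, ‖α n‖ ≤ 1)
    (hruns : HasLongRuns α) : spectrum ℂ S = Metric.closedBall 0 1 := by
  refine subset_antisymm ((spectrum.subset_closedBall_norm S).trans
    (Metric.closedBall_subset_closedBall (hS.opNorm_le_one hα))) ?_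
  rw [← closure_ball (0 : ℂ) one_ne_zero]
  exact (spectrum.isClosed S).closure_subset_iff.mpr fun μ hμ =>
    hS.mem_spectrum_of_runs hruns (mem_ball_zero_iff.mp hμ)

theorem Pproj_mul_pow_apply_of_lt (hS : IsWeightedShift α S) (k : ℕ) (x : L2) {m n : ℕ}
    (hn : n < m) : ((Pproj k * S) ^ m) x n = 0 := by
  induction m generalizing n with
  | zero => omega
  | succ m ih =>
    rw [pow_succ', mul_apply_eq_comp, mul_apply_eq_comp, Pproj_apply]
    split_ifs
    · cases n with
      | zero => exact hS.apply_zero _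
      | succ n => rw [hS.apply_succ, ih (by omega), mul_zero]
    · rfl

theorem Pproj_mul_pow_eq_zero (hS : IsWeightedShift α S) (k : ℕ) :
    (Pproj k * S) ^ (k + 1) = 0 := by
  ext x n
  by_cases hn : n < k + 1
  · exact hS.Pproj_mul_pow_apply_of_lt k x hn
  · rw [pow_succ', mul_apply_eq_comp, mul_apply_eq_comp, Pproj_apply, if_neg (by omega)]
    rfl

end IsWeightedShift

/-- Let `S` be the weighted shift `S e_n = α_n e_{n+1}` with 0-1 weights
`α` containing blocks of consecutive 1s of unboundedly increasing length
(`α_{l_j+1} = ⋯ = α_{l_j+j} = 1`).  Then `sp(S)` is the closed unit disc, while every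
truncation `P_k S` has `sp(P_k S) = {0}`. -/
theorem stmt_17 (α : ℕ → ℂ) (hα : ∀ n : ℕ, α n = 0 ∨ α n = 1)
    (hblocks : ∀ j : ℕ, ∃ l : ℕ, ∀ i : ℕ, l + 1 ≤ i → i ≤ l + j → α i = 1)
    (S : L2 →L[ℂ] L2) (hS : ∀ n : ℕ, S (eVec n) = α n • eVec (n + 1)) :
    spectrum ℂ S = Metric.closedBall (0 : ℂ) 1 ∧
    ∀ k : ℕ, spectrum ℂ (Pproj k * S) = {0} := by
  have hS' : IsWeightedShift α S := hS
  have hα' : ∀ n, ‖α n‖ ≤ 1 := fun n => by rcases hα n with h | h <;> simp [h]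
  exact ⟨hS'.spectrum_eq_closedBall hα' (hasLongRuns_of_blocks hα hblocks), fun k =>
    spectrum_eq_singleton_zero_of_pow_eq_zero k.succ_pos (hS'.Pproj_mul_pow_eq_zero k)⟩

end
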